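/- Let k ≥ 1 and n = 2k + 1. Then the radio number of C_n □ C_n satisfies rn(C_n □ C_n) ≤ ((n² − 1)/2)·(k + 1) + 1; that is, there exists a radio labeling of C_n □ C_n whose span equals ((n² − 1)/2)·(k + 1) + 1. -/

import Mathlib

open SimpleGraph

/-- `c` is a radio labeling of `G`: labels are positive integers and for every two
distinct vertices `u, v` we have `d(u,v) + |c(u) - c(v)| ≥ 1 + diam(G)`. -/
def IsRadioLabeling {V : Type*} (G : SimpleGraph V) (c : V → ℕ) : Prop :=
  (∀ v, 1 ≤ c v) ∧
    ∀ u v : V, u ≠ v → G.diam + 1 ≤ G.dist u v + Nat.dist (c u) (c v)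

/-- The span of a labeling: the maximum label used. -/
def labelSpan {V : Type*} [Fintype V] (c : V → ℕ) : ℕ := Finset.univ.sup c

/-- The radio number of `G`: the minimum span over all radio labelings. -/
noncomputable def radioNumber {V : Type*} [Fintype V] (G : SimpleGraph V) : ℕ :=
  sInf {s | ∃ c : V → ℕ, IsRadioLabeling G c ∧ labelSpan c = s}

/-!
Write `n = 2k + 1`, list the vertices of `C_n □ C_n` as `x_0, …, x_{n²-1}` and give `x_i` the
label `1 + ⌊(i(k+1) + 1)/2⌋`; the last label is then `(n² - 1)(k + 1)/2 + 1`. The diameter is at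
most `2k` and the labels of `x_i` and `x_j` differ by at least `⌊(j - i)(k + 1)/2⌋`, so the radio
condition is automatic when `j - i ≥ 4` and only the jumps `x_{i+s} - x_i` with `s ≤ 3` need to
be long. For `k ≥ 3` the enumeration `x_{qn+r} = ((⌊k/2⌋ + 1) r + q, k r - q)` (mod `n`) has long
enough jumps, and it is a bijection because `4 (⌊k/2⌋ + 1 + k) = ±1` mod `n`. For `k = 1, 2`
explicit enumerations do the job.
-/

open Function
open Fin.NatCast Fin.CommRing

namespace SimpleGraph

variable {V W : Type*}

theorem Reachable.le_add_dist_of_adj_le {G : SimpleGraph V} {f : V → ℕ}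
    (hf : ∀ x y, G.Adj x y → f y ≤ f x + 1) {u v : V} (h : G.Reachable u v) :
    f v ≤ f u + G.dist u v := by
  obtain ⟨p, hp⟩ := h.exists_walk_length_eq_dist
  rw [← hp]
  clear hp h
  induction p with
  | nil => simp
  | cons hadj p ih =>
    rw [Walk.length_cons]
    have := hf _ _ hadj
    omega

theorem dist_boxProd {G : SimpleGraph V} {H : SimpleGraph W} (hG : G.Preconnected)
    (hH : H.Preconnected) (x y : V × W) :
    (G □ H).dist x y = G.dist x.1 y.1 + H.dist x.2 y.2 := by
  have h := (hG.boxProd hH x y).coe_dist_eq_edist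
  rw [edist_boxProd, ← (hG x.1 y.1).coe_dist_eq_edist, ← (hH x.2 y.2).coe_dist_eq_edist] at h
  exact_mod_cast h

theorem diam_le_of_forall_dist_le [Nonempty V] {G : SimpleGraph V} {d : ℕ}
    (h : ∀ u v, G.dist u v ≤ d) : G.diam ≤ d := by
  obtain ⟨u, v, huv⟩ := G.exists_dist_eq_diam
  exact huv ▸ h u v

end SimpleGraph

section Ordering

variable {V : Type*} {N : ℕ} {f : ℕ → ℕ}

theorem isRadioLabeling_of_ordering (G : SimpleGraph V) (x : Fin N ≃ V) (hf : Monotone f)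
    (hf₀ : 1 ≤ f 0)
    (hgap : ∀ i j : Fin N, i < j → G.diam + 1 ≤ G.dist (x i) (x j) + (f j - f i)) :
    IsRadioLabeling G (fun v ↦ f (x.symm v)) := by
  refine ⟨fun v ↦ hf₀.trans (hf (Nat.zero_le _)), fun u v huv ↦ ?_⟩
  obtain ⟨i, rfl⟩ := x.surjective u
  obtain ⟨j, rfl⟩ := x.surjective v
  simp only [Equiv.symm_apply_apply]
  rcases lt_or_gt_of_ne (x.injective.ne_iff.mp huv) with hij | hij
  · rw [Nat.dist_eq_sub_of_le (hf hij.le)]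
    exact hgap i j hij
  · rw [G.dist_comm, Nat.dist_comm, Nat.dist_eq_sub_of_le (hf hij.le)]
    exact hgap j i hij

theorem labelSpan_of_ordering [Fintype V] (x : Fin N ≃ V) (hf : Monotone f) (hN : 0 < N) :
    labelSpan (fun v ↦ f (x.symm v)) = f (N - 1) :=
  le_antisymm (Finset.sup_le fun v _ ↦ hf (Nat.le_sub_one_of_lt (x.symm v).isLt))
    (Finset.le_sup_of_le (Finset.mem_univ (x ⟨N - 1, by omega⟩)) (by simp))

end Ordering

section CyclicNorm

variable {n : ℕ}

def cyclicNorm (a : Fin n) : ℕ := min a.val (-a).val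

theorem cyclicNorm_eq (a : Fin n) : cyclicNorm a = min a.val (n - a.val) := by
  rw [cyclicNorm, Fin.val_neg']
  rcases Nat.eq_zero_or_pos a.val with h | h
  · simp [h]
  · rw [Nat.mod_eq_of_lt (by omega)]

theorem cyclicNorm_neg (a : Fin n) : cyclicNorm (-a) = cyclicNorm a := by
  simp [cyclicNorm, min_comm]

theorem two_mul_cyclicNorm_le (a : Fin n) : 2 * cyclicNorm a ≤ n := by
  rw [cyclicNorm_eq]
  omega

variable [NeZero n]

@[simp]
theorem cyclicNorm_zero : cyclicNorm (0 : Fin n) = 0 := by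
  simp [cyclicNorm]

theorem cyclicNorm_natCast (m : ℕ) : cyclicNorm (m : Fin n) = min (m % n) (n - m % n) := by
  rw [cyclicNorm_eq, Fin.val_natCast]

theorem cyclicNorm_add_one_le (a : Fin n) : cyclicNorm (a + 1) ≤ cyclicNorm a + 1 := by
  obtain ⟨m, rfl⟩ : ∃ m, n = m + 1 := Nat.exists_eq_succ_of_ne_zero (NeZero.ne n)
  rw [cyclicNorm_eq, cyclicNorm_eq, Fin.val_add_one]
  split_ifs with h
  · simp [h]
  · have := a.isLt
    omega

theorem cyclicNorm_sub_one_le (a : Fin n) : cyclicNorm (a - 1) ≤ cyclicNorm a + 1 := by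
  rw [← cyclicNorm_neg, ← cyclicNorm_neg a, neg_sub', sub_neg_eq_add]
  exact cyclicNorm_add_one_le (-a)

end CyclicNorm

section Torus

variable {n : ℕ} [NeZero n]

theorem dist_cycleGraph_add_one_le (a : Fin n) : (cycleGraph n).dist a (a + 1) ≤ 1 := by
  rcases Nat.lt_or_ge 1 n with hn | hn
  · refine (dist_eq_one_iff_adj.mpr ?_).le
    rw [cycleGraph_adj', add_sub_cancel_left, Fin.val_one', Nat.mod_eq_of_lt hn]
    exact Or.inr rfl
  · have : Subsingleton (Fin n) := Fin.subsingleton_iff_le_one.mpr hn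
    simp [Subsingleton.elim (a + 1) a]

theorem dist_cycleGraph_add_natCast_le (a : Fin n) (m : ℕ) :
    (cycleGraph n).dist a (a + m) ≤ m := by
  induction m with
  | zero => simp
  | succ m ih =>
    calc (cycleGraph n).dist a (a + (m + 1 : ℕ))
        ≤ (cycleGraph n).dist a (a + m) + (cycleGraph n).dist (a + m) (a + m + 1) := by
          rw [Nat.cast_succ, ← add_assoc]
          exact (cycleGraph_preconnected _ _).dist_triangle_left _
      _ ≤ m + 1 := add_le_add ih (dist_cycleGraph_add_one_le _)

theorem dist_cycleGraph (a b : Fin n) : (cycleGraph n).dist a b = cyclicNorm (b - a) := by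
  apply le_antisymm
  · have hab := dist_cycleGraph_add_natCast_le a (b - a).val
    have hba := dist_cycleGraph_add_natCast_le b (a - b).val
    rw [Fin.cast_val_eq_self, add_sub_cancel] at hab hba
    rw [SimpleGraph.dist_comm] at hba
    rw [cyclicNorm, neg_sub]
    exact le_min hab hba
  · have hadj (x y : Fin n) (hxy : (cycleGraph n).Adj x y) :
        cyclicNorm (y - a) ≤ cyclicNorm (x - a) + 1 := by
      rw [cycleGraph_adj'] at hxy
      have hone {c : Fin n} (hc : c.val = 1) : c = 1 := by
        rw [Fin.ext_iff, hc, Fin.val_one', Nat.mod_eq_of_lt (hc ▸ c.isLt)]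
      rcases hxy with h | h
      · rw [show y - a = x - a - 1 by rw [← hone h]; abel]
        exact cyclicNorm_sub_one_le _
      · rw [show y - a = x - a + 1 by rw [← hone h]; abel]
        exact cyclicNorm_add_one_le _
    simpa using
      (cycleGraph_preconnected a b).le_add_dist_of_adj_le (f := fun x ↦ cyclicNorm (x - a)) hadj

theorem dist_cycleGraph_boxProd (u v : Fin n × Fin n) :
    (cycleGraph n □ cycleGraph n).dist u v = cyclicNorm (v - u).1 + cyclicNorm (v - u).2 := by
  rw [dist_boxProd cycleGraph_preconnected cycleGraph_preconnected, dist_cycleGraph,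
    dist_cycleGraph, Prod.fst_sub, Prod.snd_sub]

theorem diam_cycleGraph_boxProd_le : (cycleGraph n □ cycleGraph n).diam ≤ 2 * (n / 2) :=
  diam_le_of_forall_dist_le fun u v ↦ by
    have h₁ := two_mul_cyclicNorm_le (v - u).1
    have h₂ := two_mul_cyclicNorm_le (v - u).2
    rw [dist_cycleGraph_boxProd]
    omega

end Torus

section Labels

def radioLabel (k i : ℕ) : ℕ := 1 + (i * (k + 1) + 1) / 2

variable {k : ℕ}

theorem radioLabel_monotone : Monotone (radioLabel k) := fun i j hij ↦ by
  unfold radioLabel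
  gcongr

theorem mul_div_two_le_radioLabel_sub {i j : ℕ} (hij : i ≤ j) :
    (j - i) * (k + 1) / 2 ≤ radioLabel k j - radioLabel k i := by
  obtain ⟨s, rfl⟩ := Nat.exists_eq_add_of_le hij
  rw [radioLabel, radioLabel, add_mul, Nat.add_sub_cancel_left]
  omega

theorem radioLabel_sq_sub_one :
    radioLabel k ((2 * k + 1) ^ 2 - 1) = ((2 * k + 1) ^ 2 - 1) / 2 * (k + 1) + 1 := by
  have h : (2 * k + 1) ^ 2 - 1 = 2 * (2 * k * (k + 1)) := by
    rw [Nat.sub_eq_iff_eq_add (Nat.one_le_pow _ _ (by omega))]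
    ring
  rw [h, radioLabel, Nat.mul_div_cancel_left _ two_pos, mul_assoc, add_comm]
  omega

def IsRadioOrdering (k : ℕ) (x : Fin ((2 * k + 1) ^ 2) → Fin (2 * k + 1) × Fin (2 * k + 1)) :
    Prop :=
  ∀ i j, i < j →
    2 * k + 1 ≤
      cyclicNorm (x j - x i).1 + cyclicNorm (x j - x i).2 + (radioLabel k j - radioLabel k i)

theorem exists_radioLabeling_of_isRadioOrdering
    {x : Fin ((2 * k + 1) ^ 2) → Fin (2 * k + 1) × Fin (2 * k + 1)} (hx : Bijective x)
    (hgap : IsRadioOrdering k x) :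
    ∃ c : Fin (2 * k + 1) × Fin (2 * k + 1) → ℕ,
      IsRadioLabeling (cycleGraph (2 * k + 1) □ cycleGraph (2 * k + 1)) c ∧
        labelSpan c = ((2 * k + 1) ^ 2 - 1) / 2 * (k + 1) + 1 := by
  let e := Equiv.ofBijective x hx
  refine ⟨_, isRadioLabeling_of_ordering _ e radioLabel_monotone le_self_add fun i j hij ↦ ?_,
    by rw [labelSpan_of_ordering e radioLabel_monotone (by positivity), radioLabel_sq_sub_one]⟩
  have hdiam := diam_cycleGraph_boxProd_le (n := 2 * k + 1)
  have := hgap i j hij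
  rw [dist_cycleGraph_boxProd]
  simp only [e, Equiv.ofBijective_apply]
  omega

end Labels

theorem Nat.mod_eq_or_of_lt_three_mul {m n : ℕ} (h : m < 3 * n) :
    m % n = m ∨ m % n + n = m ∨ m % n + 2 * n = m := by
  have hdiv := Nat.div_add_mod m n
  have : m / n < 3 := Nat.div_lt_of_lt_mul (by omega)
  interval_cases m / n <;> omega

theorem Nat.add_div_sub_div_le_one {i s n : ℕ} (hs : s ≤ n) : (i + s) / n - i / n ≤ 1 := by
  rcases Nat.eq_zero_or_pos n with rfl | hn
  · simp
  · have := (Nat.div_le_div_right (c := n) (Nat.add_le_add_left hs i)).trans_eq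
      (Nat.add_div_right i hn)
    omega

section TorusOrdering

variable {k : ℕ}

/-- For `i = q (2k+1) + r` this is `((k / 2 + 1) r + q, k r - q)`. -/
def torusOrdering (k i : ℕ) : Fin (2 * k + 1) × Fin (2 * k + 1) :=
  (((k / 2 + 1) * i + i / (2 * k + 1) : ℕ), (k * i + 2 * k * (i / (2 * k + 1)) : ℕ))

theorem isUnit_natCast_div_two_add_one_add (k : ℕ) :
    IsUnit ((k / 2 + 1 + k : ℕ) : Fin (2 * k + 1)) := by
  have hn := Fin.natCast_self (2 * k + 1)
  generalize hc : k / 2 + 1 + k = c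
  rcases Nat.even_or_odd' k with ⟨m, rfl | rfl⟩
  · have h : ((c * 4 : ℕ) : Fin (2 * (2 * m) + 1)) = (1 + 3 * (2 * (2 * m) + 1) : ℕ) := by
      congr 1
      omega
    push_cast at h hn
    exact IsUnit.of_mul_eq_one 4 (by linear_combination h + 3 * hn)
  · have h :
        ((c * 4 + 1 : ℕ) : Fin (2 * (2 * m + 1) + 1)) = (3 * (2 * (2 * m + 1) + 1) : ℕ) := by
      congr 1
      omega
    push_cast at h hn
    exact IsUnit.of_mul_eq_one (-4) (by linear_combination -h - 3 * hn)

theorem torusOrdering_injective :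
    Injective (fun i : Fin ((2 * k + 1) ^ 2) ↦ torusOrdering k i) := by
  intro i j h
  have h₁ := congrArg Prod.fst h
  have h₂ := congrArg Prod.snd h
  simp only [torusOrdering] at h₁ h₂
  have hn : ((2 * k + 1 : ℕ) : Fin (2 * k + 1)) = 0 := Fin.natCast_self _
  push_cast at h₁ h₂ hn
  -- the coordinates of `torusOrdering k i` sum to `(k / 2 + 1 + k) i`, as `2k + 1 = 0`
  have hr : ((i : ℕ) : Fin (2 * k + 1)) = (j : ℕ) :=
    (isUnit_natCast_div_two_add_one_add k).mul_left_cancel (by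
      push_cast
      linear_combination h₁ + h₂
        + (((j / (2 * k + 1) : ℕ) : Fin (2 * k + 1)) - ((i / (2 * k + 1) : ℕ))) * hn)
  have hq : ((i / (2 * k + 1) : ℕ) : Fin (2 * k + 1)) = ((j / (2 * k + 1) : ℕ)) := by
    linear_combination h₁ - (((k / 2 : ℕ) : Fin (2 * k + 1)) + 1) * hr
  have hlt (l : Fin ((2 * k + 1) ^ 2)) : (l : ℕ) / (2 * k + 1) < 2 * k + 1 :=
    Nat.div_lt_of_lt_mul (sq (2 * k + 1) ▸ l.isLt)
  replace hr := congrArg Fin.val hr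
  replace hq := congrArg Fin.val hq
  rw [Fin.val_natCast, Fin.val_natCast] at hr hq
  rw [Nat.mod_eq_of_lt (hlt i), Nat.mod_eq_of_lt (hlt j)] at hq
  rw [Fin.ext_iff, ← Nat.div_add_mod i (2 * k + 1), ← Nat.div_add_mod j (2 * k + 1), hr, hq]

theorem torusOrdering_bijective :
    Bijective (fun i : Fin ((2 * k + 1) ^ 2) ↦ torusOrdering k i) := by
  rw [Fintype.bijective_iff_injective_and_card]
  exact ⟨torusOrdering_injective, by simp [sq]⟩

theorem torusOrdering_add_sub (i s : ℕ) :
    torusOrdering k (i + s) - torusOrdering k i =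
      ((((k / 2 + 1) * s + ((i + s) / (2 * k + 1) - i / (2 * k + 1)) : ℕ) : Fin (2 * k + 1)),
        ((k * s + 2 * k * ((i + s) / (2 * k + 1) - i / (2 * k + 1)) : ℕ) : Fin (2 * k + 1))) := by
  obtain ⟨w, hw⟩ := Nat.exists_eq_add_of_le
    (Nat.div_le_div_right (c := 2 * k + 1) (Nat.le_add_right i s))
  simp only [torusOrdering, hw, Nat.add_sub_cancel_left]
  ext : 1 <;> simp only [Prod.fst_sub, Prod.snd_sub] <;> push_cast <;> ring

theorem two_mul_add_one_le_cyclicNorm_add_cyclicNorm (hk : 3 ≤ k) {s w : ℕ} (hs₁ : 1 ≤ s)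
    (hs₃ : s ≤ 3) (hw : w ≤ 1) :
    2 * k + 1 ≤ cyclicNorm (((k / 2 + 1) * s + w : ℕ) : Fin (2 * k + 1))
      + cyclicNorm ((k * s + 2 * k * w : ℕ) : Fin (2 * k + 1)) + s * (k + 1) / 2 := by
  have h₁ := Nat.mod_eq_or_of_lt_three_mul (m := (k / 2 + 1) * s + w) (n := 2 * k + 1)
    (by nlinarith [Nat.div_mul_le_self k 2])
  have h₂ := Nat.mod_eq_or_of_lt_three_mul (m := k * s + 2 * k * w) (n := 2 * k + 1)
    (by nlinarith)
  have h₃ := Nat.mod_lt ((k / 2 + 1) * s + w) (by omega : 0 < 2 * k + 1)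
  have h₄ := Nat.mod_lt (k * s + 2 * k * w) (by omega : 0 < 2 * k + 1)
  rw [cyclicNorm_natCast, cyclicNorm_natCast]
  interval_cases s <;> interval_cases w <;>
    simp only [mul_one, one_mul, mul_zero, add_zero] at h₁ h₂ h₃ h₄ ⊢ <;> omega

theorem isRadioOrdering_torusOrdering (hk : 3 ≤ k) :
    IsRadioOrdering k (fun i ↦ torusOrdering k i) := by
  intro i j hij
  obtain ⟨s, hs⟩ := Nat.exists_eq_add_of_le (Fin.le_def.mp hij.le)
  have hlabel := mul_div_two_le_radioLabel_sub (k := k) (Fin.le_def.mp hij.le)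
  dsimp only
  rw [hs, Nat.add_sub_cancel_left] at hlabel
  rw [hs]
  rcases le_or_gt 4 s with hs₄ | hs₄
  · have : 4 * (k + 1) ≤ s * (k + 1) := Nat.mul_le_mul_right _ hs₄
    omega
  · have := two_mul_add_one_le_cyclicNorm_add_cyclicNorm hk (s := s) (by omega) (by omega)
      (Nat.add_div_sub_div_le_one (i := i) (s := s) (n := 2 * k + 1) (by omega))
    rw [torusOrdering_add_sub]
    exact this.trans (by gcongr)

end TorusOrdering

-- The formula of `torusOrdering` fails for `k = 1, 2`.

def torusOrdering₁ : Fin ((2 * 1 + 1) ^ 2) → Fin (2 * 1 + 1) × Fin (2 * 1 + 1) :=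
  ![(0, 0), (1, 1), (2, 2), (0, 1), (1, 2), (2, 0), (0, 2), (1, 0), (2, 1)]

def torusOrdering₂ : Fin ((2 * 2 + 1) ^ 2) → Fin (2 * 2 + 1) × Fin (2 * 2 + 1) :=
  ![(0, 0), (1, 2), (3, 0), (0, 1), (2, 3), (0, 4), (2, 1), (0, 2), (3, 4), (1, 0), (3, 2), (1, 3),
    (4, 0), (3, 3), (1, 1), (4, 2), (2, 4), (0, 3), (3, 1), (4, 4), (2, 2), (1, 4), (4, 1), (2, 0),
    (4, 3)]

theorem exists_isRadioOrdering {k : ℕ} (hk : 1 ≤ k) :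
    ∃ x, Bijective x ∧ IsRadioOrdering k x := by
  rcases (by omega : k = 1 ∨ k = 2 ∨ 3 ≤ k) with rfl | rfl | hk₃
  · exact ⟨torusOrdering₁, by decide, by unfold IsRadioOrdering; decide⟩
  · exact ⟨torusOrdering₂, by decide, by unfold IsRadioOrdering; decide⟩
  · exact ⟨_, torusOrdering_bijective, isRadioOrdering_torusOrdering hk₃⟩

/-- for `n = 2k + 1`, `k ≥ 1`, `rn(C_n □ C_n) ≤ ((n² - 1)/2)(k + 1) + 1`; indeed
there is a radio labeling of `C_n □ C_n` whose span equals `((n² - 1)/2)(k + 1) + 1`. -/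
theorem radioNumber_odd_upper_bound (n k : ℕ) (hk : 1 ≤ k) (hn : n = 2 * k + 1) :
    radioNumber (cycleGraph n □ cycleGraph n) ≤ (n ^ 2 - 1) / 2 * (k + 1) + 1 ∧
      ∃ c : Fin n × Fin n → ℕ, IsRadioLabeling (cycleGraph n □ cycleGraph n) c ∧
        labelSpan c = (n ^ 2 - 1) / 2 * (k + 1) + 1 := by
  subst hn
  obtain ⟨x, hx, hgap⟩ := exists_isRadioOrdering hk
  obtain ⟨c, hc, hspan⟩ := exists_radioLabeling_of_isRadioOrdering hx hgap
  exact ⟨Nat.sInf_le ⟨c, hc, hspan⟩, c, hc, hspan⟩
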